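/- arXiv:math-ph/0310033 — 3 statements merged into one kernel-verified Lean document; each statement's English description precedes it below -/
import Mathlib

section
/- There exist constants f₁, f₂ ∈ (0,∞) and r₁ > 0 such that for every x₂ ∈ ℝ^{d₂} with |x₂| ≥ r₁ one has f₁ · |x₂|^{−α₂(1−γ₁)} ≤ ∫_{{y₂ : |y₂| < 1/2}} f^{(2)}(y₂ − x₂) dy₂ and f^{(2)}(x₂) ≤ f₂ · |x₂|^{−α₂(1−γ₁)}. -/
/-! Write `t = ‖x₂‖`. Both bounds reduce to the `d₁`-dimensional integral
`∫ (‖x₁‖^α₁ + t^α₂)⁻¹ dx₁`, which the substitution `x₁ = t^(α₂/α₁) u` turns into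
`t^(-α₂(1-γ₁)) · ∫ (‖u‖^α₁ + 1)⁻¹ du`, the last integral being finite since `d₁ < α₁`.
The upper bound follows by integrating the pointwise bound on `f` in `x₁`. For the lower bound,
integrate the cube lower bound at `(-v, x₂)` over all `v ∈ ℝ^{d₁}`: by Fubini and translation
invariance the result is `∫ f⁽²⁾(y₂ - x₂) dy₂` over the unit cube of `ℝ^{d₂}`, which differs from
`{|y₂| < 1/2}` by a null set. -/

open MeasureTheory ENNReal

noncomputable section

/-- The half-open unit cube `Λ_j = j + [-1/2, 1/2)^d` centred at the lattice point `j`. -/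
def cube (d : ℕ) (j : Fin d → ℤ) : Set (Fin d → ℝ) :=
  {x | ∀ i, (j i : ℝ) - 1/2 ≤ x i ∧ x i < (j i : ℝ) + 1/2}

/-- The unit cube in the product space `ℝ^{d₁} × ℝ^{d₂}` centred at the lattice point `j`. -/
def cubeP (d₁ d₂ : ℕ) (j : (Fin d₁ → ℤ) × (Fin d₂ → ℤ)) :
    Set ((Fin d₁ → ℝ) × (Fin d₂ → ℝ)) :=
  (cube d₁ j.1) ×ˢ (cube d₂ j.2)

theorem one_add_rpow_le_two_rpow_mul {r α : ℝ} (hr : 0 ≤ r) (hα : 0 ≤ α) :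
    (1 + r) ^ α ≤ 2 ^ α * (r ^ α + 1) := by
  rcases le_total r 1 with hr1 | hr1
  · calc (1 + r) ^ α ≤ 2 ^ α := by gcongr; linarith
      _ ≤ 2 ^ α * (r ^ α + 1) := by
        have : 0 ≤ r ^ α := by positivity
        nlinarith [Real.rpow_nonneg (zero_le_two (α := ℝ)) α]
  · calc (1 + r) ^ α ≤ (2 * r) ^ α := by gcongr; linarith
      _ = 2 ^ α * r ^ α := Real.mul_rpow zero_le_two hr
      _ ≤ 2 ^ α * (r ^ α + 1) := by gcongr; linarith

section InvRpowNormAdd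

variable {E : Type*} [NormedAddCommGroup E] [MeasurableSpace E] [BorelSpace E] (μ : Measure E)

theorem lintegral_inv_rpow_norm_add_one_pos [NeZero μ] (α : ℝ) :
    0 < ∫⁻ x, ENNReal.ofReal ((‖x‖ ^ α + 1)⁻¹) ∂μ := by
  have hsupp : Function.support (fun x : E => ENNReal.ofReal ((‖x‖ ^ α + 1)⁻¹)) = Set.univ :=
    Function.support_eq_univ fun x => by positivity
  rw [lintegral_pos_iff_support (by fun_prop), hsupp]
  exact Measure.measure_univ_pos.mpr (NeZero.ne μ)

variable [NormedSpace ℝ E] [FiniteDimensional ℝ E] [μ.IsAddHaarMeasure]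

theorem lintegral_inv_rpow_norm_add_one_lt_top {α : ℝ} (hα : (Module.finrank ℝ E : ℝ) < α) :
    ∫⁻ x, ENNReal.ofReal ((‖x‖ ^ α + 1)⁻¹) ∂μ < ∞ := by
  have hα0 : 0 ≤ α := (Nat.cast_nonneg _).trans hα.le
  have hbound : ∀ x : E, ENNReal.ofReal ((‖x‖ ^ α + 1)⁻¹) ≤
      ENNReal.ofReal (2 ^ α) * ENNReal.ofReal ((1 + ‖x‖) ^ (-α)) := fun x => by
    rw [← ENNReal.ofReal_mul (by positivity), Real.rpow_neg (by positivity), ← div_eq_mul_inv]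
    refine ENNReal.ofReal_le_ofReal ?_
    rw [le_div_iff₀ (by positivity), ← div_eq_inv_mul, div_le_iff₀ (by positivity)]
    exact one_add_rpow_le_two_rpow_mul (norm_nonneg x) hα0
  calc ∫⁻ x, ENNReal.ofReal ((‖x‖ ^ α + 1)⁻¹) ∂μ
      ≤ ∫⁻ x, ENNReal.ofReal (2 ^ α) * ENNReal.ofReal ((1 + ‖x‖) ^ (-α)) ∂μ := lintegral_mono hbound
    _ = ENNReal.ofReal (2 ^ α) * ∫⁻ x, ENNReal.ofReal ((1 + ‖x‖) ^ (-α)) ∂μ :=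
      lintegral_const_mul _ (by fun_prop)
    _ < ∞ := ENNReal.mul_lt_top ENNReal.ofReal_lt_top (finite_integral_one_add_norm hα)

theorem lintegral_inv_rpow_norm_add {α a : ℝ} (hα : 0 < α) (ha : 0 < a) :
    ∫⁻ x, ENNReal.ofReal ((‖x‖ ^ α + a)⁻¹) ∂μ =
      ENNReal.ofReal (a ^ ((Module.finrank ℝ E : ℝ) / α - 1)) *
        ∫⁻ x, ENNReal.ofReal ((‖x‖ ^ α + 1)⁻¹) ∂μ := by
  set c := a ^ α⁻¹ with hc
  have hc0 : 0 < c := by positivity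
  have hcα : c ^ α = a := by rw [hc, ← Real.rpow_mul ha.le, inv_mul_cancel₀ hα.ne', Real.rpow_one]
  have hsmul : ∫⁻ x, ENNReal.ofReal ((‖c • x‖ ^ α + a)⁻¹) ∂μ =
      ENNReal.ofReal |(c ^ Module.finrank ℝ E)⁻¹| * ∫⁻ x, ENNReal.ofReal ((‖x‖ ^ α + a)⁻¹) ∂μ := by
    rw [← lintegral_map (f := fun x => ENNReal.ofReal ((‖x‖ ^ α + a)⁻¹)) (by fun_prop)
      (measurable_const_smul c), Measure.map_addHaar_smul μ hc0.ne', lintegral_smul_measure,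
      smul_eq_mul]
  have hscaled : ∀ x : E, ‖c • x‖ ^ α + a = a * (‖x‖ ^ α + 1) := fun x => by
    rw [norm_smul, Real.norm_of_nonneg hc0.le, Real.mul_rpow hc0.le (norm_nonneg x), hcα]; ring
  set n := Module.finrank ℝ E
  have hcn : c ^ n * a⁻¹ = a ^ ((n : ℝ) / α - 1) := by
    rw [hc, ← Real.rpow_natCast, ← Real.rpow_mul ha.le, Real.rpow_sub ha, Real.rpow_one,
      div_eq_mul_inv, inv_mul_eq_div]
  calc ∫⁻ x, ENNReal.ofReal ((‖x‖ ^ α + a)⁻¹) ∂μ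
      = ENNReal.ofReal (c ^ n) * (ENNReal.ofReal |(c ^ n)⁻¹| *
          ∫⁻ x, ENNReal.ofReal ((‖x‖ ^ α + a)⁻¹) ∂μ) := by
        rw [← mul_assoc, ← ENNReal.ofReal_mul (by positivity), abs_of_pos (by positivity),
          mul_inv_cancel₀ (by positivity), ENNReal.ofReal_one, one_mul]
    _ = ENNReal.ofReal (c ^ n) * (ENNReal.ofReal a⁻¹ *
          ∫⁻ x, ENNReal.ofReal ((‖x‖ ^ α + 1)⁻¹) ∂μ) := by
        rw [← hsmul]
        congr 1
        rw [← lintegral_const_mul _ (by fun_prop)]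
        simp_rw [hscaled, mul_inv, ENNReal.ofReal_mul (inv_nonneg.mpr ha.le)]
    _ = _ := by rw [← mul_assoc, ← ENNReal.ofReal_mul (by positivity), hcn]

theorem lintegral_div_rpow_norm_add_rpow {α β c t : ℝ} (hα : (Module.finrank ℝ E : ℝ) < α)
    (hc : 0 ≤ c) (ht : 0 < t) :
    ∫⁻ x, ENNReal.ofReal (c / (‖x‖ ^ α + t ^ β)) ∂μ =
      ENNReal.ofReal (c * (∫⁻ x, ENNReal.ofReal ((‖x‖ ^ α + 1)⁻¹) ∂μ).toReal *
        t ^ (-(β * (1 - (Module.finrank ℝ E : ℝ) / α)))) := by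
  have hα0 : 0 < α := (Nat.cast_nonneg _).trans_lt hα
  simp_rw [div_eq_mul_inv c, ENNReal.ofReal_mul hc]
  rw [lintegral_const_mul _ (by fun_prop), lintegral_inv_rpow_norm_add μ hα0 (by positivity),
    ← Real.rpow_mul ht.le, ENNReal.ofReal_mul (by positivity), ENNReal.ofReal_mul hc,
    ENNReal.ofReal_toReal (lintegral_inv_rpow_norm_add_one_lt_top μ hα).ne]
  ring_nf

end InvRpowNormAdd

theorem lintegral_setLIntegral_prod_add_fst {G F : Type*} [MeasurableSpace G] [MeasurableSpace F]
    [AddGroup G] [MeasurableAdd₂ G] (μ : Measure G) (ν : Measure F) [μ.IsAddLeftInvariant]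
    [SFinite μ] [SFinite ν] {g : G × F → ℝ≥0∞} (hg : Measurable g) (s : Set G) (t : Set F) :
    ∫⁻ v, ∫⁻ y in s ×ˢ t, g (y.1 + v, y.2) ∂μ.prod ν ∂μ =
      μ s * ∫⁻ y₂ in t, ∫⁻ x₁, g (x₁, y₂) ∂μ ∂ν := by
  rw [lintegral_lintegral_swap (by fun_prop)]
  have hshift (y : G × F) : ∫⁻ v, g (y.1 + v, y.2) ∂μ = ∫⁻ x₁, g (x₁, y.2) ∂μ :=
    lintegral_add_left_eq_self (fun x₁ => g (x₁, y.2)) y.1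
  simp_rw [hshift]
  rw [← Measure.prod_restrict, lintegral_prod _ (by fun_prop)]
  exact (setLIntegral_const s (∫⁻ y₂ in t, ∫⁻ x₁, g (x₁, y₂) ∂μ ∂ν)).trans (mul_comm _ _)

theorem cube_zero_eq_pi (d : ℕ) : cube d 0 = Set.univ.pi fun _ => Set.Ico (-(1/2) : ℝ) (1/2) := by
  ext x; simp [cube, Set.mem_pi]

theorem volume_cube_zero (d : ℕ) : volume (cube d 0) = 1 := by
  rw [cube_zero_eq_pi, volume_pi_pi]; norm_num

theorem setOf_norm_lt_half_ae_eq_cube_zero (d : ℕ) :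
    {y : Fin d → ℝ | ‖y‖ < 1/2} =ᵐ[volume] cube d 0 := by
  have hball : {y : Fin d → ℝ | ‖y‖ < 1/2} = Set.univ.pi fun _ => Set.Ioo (-(1/2) : ℝ) (1/2) := by
    ext y; simp [pi_norm_lt_iff, abs_lt]
  rw [hball, cube_zero_eq_pi, volume_pi]
  exact Measure.ae_eq_set_pi fun _ _ => Ioo_ae_eq_Ico

theorem statement1_general (d₁ d₂ : ℕ)
    (f : (Fin d₁ → ℝ) × (Fin d₂ → ℝ) → ℝ)
    (hf_meas : Measurable f)
    (α₁ α₂ : ℝ) (hα₁ : 0 < α₁) (hα₂ : 0 < α₂)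
    (hγ : (d₁ : ℝ) / α₁ + (d₂ : ℝ) / α₂ < 1)
    (f_u f₀ r₀ : ℝ) (hfu : 0 < f_u) (hf₀ : 0 < f₀) (hr₀ : 0 < r₀)
    (h_low : ∀ x : (Fin d₁ → ℝ) × (Fin d₂ → ℝ), r₀ ≤ max ‖x.1‖ ‖x.2‖ →
      ENNReal.ofReal (f_u / (‖x.1‖ ^ α₁ + ‖x.2‖ ^ α₂)) ≤
        ∫⁻ y in cubeP d₁ d₂ 0, ENNReal.ofReal (f (y - x)))
    (h_upp : ∀ x : (Fin d₁ → ℝ) × (Fin d₂ → ℝ), r₀ ≤ max ‖x.1‖ ‖x.2‖ →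
      f x ≤ f₀ / (‖x.1‖ ^ α₁ + ‖x.2‖ ^ α₂)) :
    ∃ f₁ f₂ r₁ : ℝ, 0 < f₁ ∧ 0 < f₂ ∧ 0 < r₁ ∧
      ∀ x₂ : Fin d₂ → ℝ, r₁ ≤ ‖x₂‖ →
        (ENNReal.ofReal (f₁ * ‖x₂‖ ^ (-(α₂ * (1 - (d₁ : ℝ) / α₁)))) ≤
          ∫⁻ y₂ in {y₂ : Fin d₂ → ℝ | ‖y₂‖ < 1/2},
            ∫⁻ x₁ : Fin d₁ → ℝ, ENNReal.ofReal (f (x₁, y₂ - x₂))) ∧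
        (∫⁻ x₁ : Fin d₁ → ℝ, ENNReal.ofReal (f (x₁, x₂))) ≤
          ENNReal.ofReal (f₂ * ‖x₂‖ ^ (-(α₂ * (1 - (d₁ : ℝ) / α₁)))) := by
  have hd₁α : (Module.finrank ℝ (Fin d₁ → ℝ) : ℝ) < α₁ := by
    have : 0 ≤ (d₂ : ℝ) / α₂ := by positivity
    rw [Module.finrank_fin_fun, ← div_lt_one hα₁]; linarith
  set J := ∫⁻ u : Fin d₁ → ℝ, ENNReal.ofReal ((‖u‖ ^ α₁ + 1)⁻¹)
  have hJ : 0 < J.toReal := ENNReal.toReal_pos (lintegral_inv_rpow_norm_add_one_pos volume α₁).ne'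
    (lintegral_inv_rpow_norm_add_one_lt_top volume hd₁α).ne
  refine ⟨f_u * J.toReal, f₀ * J.toReal, r₀, by positivity, by positivity, hr₀, fun x₂ hx₂ => ?_⟩
  have hx₂0 : 0 < ‖x₂‖ := hr₀.trans_le hx₂
  have hmarginal (c : ℝ) (hc : 0 ≤ c) :
      ∫⁻ x₁ : Fin d₁ → ℝ, ENNReal.ofReal (c / (‖x₁‖ ^ α₁ + ‖x₂‖ ^ α₂)) =
        ENNReal.ofReal (c * J.toReal * ‖x₂‖ ^ (-(α₂ * (1 - (d₁ : ℝ) / α₁)))) := by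
    rw [lintegral_div_rpow_norm_add_rpow volume hd₁α hc hx₂0, Module.finrank_fin_fun]
  have hfar (x₁ : Fin d₁ → ℝ) : r₀ ≤ max ‖x₁‖ ‖x₂‖ := hx₂.trans (le_max_right _ _)
  constructor
  · calc _ = ∫⁻ v : Fin d₁ → ℝ, ENNReal.ofReal (f_u / (‖-v‖ ^ α₁ + ‖x₂‖ ^ α₂)) := by
          simp_rw [norm_neg, hmarginal f_u hfu.le]
      _ ≤ ∫⁻ v, ∫⁻ y in cubeP d₁ d₂ 0, ENNReal.ofReal (f (y - (-v, x₂))) :=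
          lintegral_mono fun v => h_low (-v, x₂) (hfar _)
      _ = volume (cube d₁ 0) * ∫⁻ y₂ in cube d₂ 0,
            ∫⁻ x₁ : Fin d₁ → ℝ, ENNReal.ofReal (f (x₁, y₂ - x₂)) := by
          rw [Measure.volume_eq_prod, ← lintegral_setLIntegral_prod_add_fst volume volume
            (g := fun z => ENNReal.ofReal (f (z.1, z.2 - x₂))) (by fun_prop)]
          congr 1; ext v; congr 1; ext y
          rw [Prod.sub_def, sub_neg_eq_add]
      _ = _ := by
          rw [volume_cube_zero, one_mul,
            setLIntegral_congr (setOf_norm_lt_half_ae_eq_cube_zero d₂)]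
  · calc _ ≤ ∫⁻ x₁ : Fin d₁ → ℝ, ENNReal.ofReal (f₀ / (‖x₁‖ ^ α₁ + ‖x₂‖ ^ α₂)) :=
          lintegral_mono fun x₁ => ENNReal.ofReal_le_ofReal (h_upp (x₁, x₂) (hfar x₁))
      _ = _ := hmarginal f₀ hf₀.le

/-- Lemma on the marginal impurity potential `f⁽²⁾`:
there are `f₁, f₂ ∈ (0,∞)` and `r₁ > 0` such that for `|x₂| ≥ r₁`
`f₁ |x₂|^{-α₂(1-γ₁)} ≤ ∫_{|y₂|<1/2} f⁽²⁾(y₂ - x₂) dy₂` and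
`f⁽²⁾(x₂) ≤ f₂ |x₂|^{-α₂(1-γ₁)}`. -/
theorem statement1 (d₁ d₂ : ℕ) (hd₁ : 0 < d₁) (hd₂ : 0 < d₂)
    (f : (Fin d₁ → ℝ) × (Fin d₂ → ℝ) → ℝ)
    (hf_meas : Measurable f) (hf_nonneg : ∀ x, 0 ≤ f x)
    (α₁ α₂ : ℝ) (hα₁ : 0 < α₁) (hα₂ : 0 < α₂)
    (hγ : (d₁ : ℝ) / α₁ + (d₂ : ℝ) / α₂ < 1)
    (f_u f₀ r₀ : ℝ) (hfu : 0 < f_u) (hf₀ : 0 < f₀) (hr₀ : 0 < r₀)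
    (h_low : ∀ x : (Fin d₁ → ℝ) × (Fin d₂ → ℝ), r₀ ≤ max ‖x.1‖ ‖x.2‖ →
      ENNReal.ofReal (f_u / (‖x.1‖ ^ α₁ + ‖x.2‖ ^ α₂)) ≤
        ∫⁻ y in cubeP d₁ d₂ 0, ENNReal.ofReal (f (y - x)))
    (h_upp : ∀ x : (Fin d₁ → ℝ) × (Fin d₂ → ℝ), r₀ ≤ max ‖x.1‖ ‖x.2‖ →
      f x ≤ f₀ / (‖x.1‖ ^ α₁ + ‖x.2‖ ^ α₂)) :
    ∃ f₁ f₂ r₁ : ℝ, 0 < f₁ ∧ 0 < f₂ ∧ 0 < r₁ ∧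
      ∀ x₂ : Fin d₂ → ℝ, r₁ ≤ ‖x₂‖ →
        (ENNReal.ofReal (f₁ * ‖x₂‖ ^ (-(α₂ * (1 - (d₁ : ℝ) / α₁)))) ≤
          ∫⁻ y₂ in {y₂ : Fin d₂ → ℝ | ‖y₂‖ < 1/2},
            ∫⁻ x₁ : Fin d₁ → ℝ, ENNReal.ofReal (f (x₁, y₂ - x₂))) ∧
        (∫⁻ x₁ : Fin d₁ → ℝ, ENNReal.ofReal (f (x₁, x₂))) ≤
          ENNReal.ofReal (f₂ * ‖x₂‖ ^ (-(α₂ * (1 - (d₁ : ℝ) / α₁)))) :=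
  statement1_general d₁ d₂ f hf_meas α₁ α₂ hα₁ hα₂ hγ f_u f₀ r₀ hfu hf₀ hr₀ h_low h_upp
end
end

section
/- Let f_u > 0, let F ⊂ Λ₀ be a Borel set of positive Lebesgue measure |F| > 0, and let ψ be as in the context. Then there exists a constant c₁ > 0, depending only on d, f_u, |F| and s, with the following property: for every locally finite Borel measure ν on ℝ^d, every h > 0 and every L > 1, setting Λ := ⋃_{j∈ℤ^d, |j| < L} Λ_j, Λ̃ := ⋃_{j∈ℤ^d, |j| < L−1} Λ_j, and V_h(x) := f_u · ν^{(h)}(x − F) where x − F := {x − z : z ∈ F}, one has |Λ|^{−1} ∫_Λ V_h(x) ψ(x)² dx ≥ c₁ · h · |Λ̃|^{−1} · #{j ∈ ℤ^d : |j| < L − 1 and ν(Λ_j) ≥ h}. -/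
/-!
By periodicity, `ψ² ≥ s` holds on all of `ℝ^d`. A heavy cube `Λ_j` (one with `ν(Λ_j) ≥ h`)
carries `ν^{(h)}`-mass exactly `h`, and by Tonelli and translation invariance of Lebesgue measure
`∫ μ(x - F) dx = |F| μ(ℝ^d)` for every s-finite `μ`. Applied to `ν^{(h)}` restricted to the heavy
cubes of `Λ̃`, whose translates by `F ⊆ Λ₀` stay in `Λ`, this gives
`∫_Λ ν^{(h)}(x - F) dx ≥ |F| h #{heavy cubes}`. Since `|Λ| ≤ 3^d |Λ̃|`, one can take
`c₁ = f_u s |F| / 3^d`.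
-/

open MeasureTheory ENNReal

noncomputable section

/-- The lattice point `j ∈ ℤ^d` viewed as a vector of `ℝ^d`. -/
def latVec (d : ℕ) (j : Fin d → ℤ) : Fin d → ℝ := fun i => (j i : ℝ)

open scoped Classical in
/-- The regularised measure `ν^{(h)} = Σ_j c_j · ν|_{Λ_j}` with `c_j = 1` if `ν(Λ_j) ≤ h`
and `c_j = h/ν(Λ_j)` otherwise. -/
def reg (d : ℕ) (ν : Measure (Fin d → ℝ)) (h : ℝ) : Measure (Fin d → ℝ) :=
  Measure.sum fun j : Fin d → ℤ =>
    (if ν (cube d j) ≤ ENNReal.ofReal h then 1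
      else ENNReal.ofReal h / ν (cube d j)) • (ν.restrict (cube d j))

open scoped Pointwise

lemma image_const_sub_eq_preimage {G : Type*} [AddCommGroup G] (x : G) (F : Set G) :
    (fun z => x - z) '' F = (fun z => x - z) ⁻¹' F :=
  congrFun (Set.image_eq_preimage_of_inverse (sub_sub_cancel x) (sub_sub_cancel x)) F

section Translates

variable {G : Type*} [MeasurableSpace G] [AddCommGroup G] [MeasurableAdd₂ G] [MeasurableNeg G]
  (μ ν : Measure G) [SFinite μ] [SFinite ν] [μ.IsAddRightInvariant] {F : Set G}

lemma lintegral_measure_image_const_sub (hF : MeasurableSet F) :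
    ∫⁻ x, ν ((fun z => x - z) '' F) ∂μ = μ F * ν Set.univ := by
  have hsub : Measurable fun p : G × G => p.1 - p.2 := measurable_fst.sub measurable_snd
  calc ∫⁻ x, ν ((fun z => x - z) '' F) ∂μ
      = ∫⁻ x, ∫⁻ y, F.indicator (fun _ => 1) (x - y) ∂ν ∂μ := by
        refine lintegral_congr fun x => ?_
        rw [image_const_sub_eq_preimage, lintegral_indicator_const_comp
          (f := fun y => x - y) (measurable_const.sub measurable_id) hF, one_mul]
    _ = ∫⁻ y, ∫⁻ x, F.indicator (fun _ => 1) (x - y) ∂μ ∂ν :=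
        lintegral_lintegral_swap ((measurable_const.indicator hF).comp hsub).aemeasurable
    _ = ∫⁻ _, μ F ∂ν := by
        refine lintegral_congr fun y => ?_
        simp_rw [sub_eq_add_neg]
        rw [lintegral_indicator_const_comp (f := fun x => x + -y) (measurable_add_const _) hF,
          measure_preimage_add_right, one_mul]
    _ = μ F * ν Set.univ := by rw [lintegral_const, mul_comm]

/-- For `x ∉ Λ` the set `x - F` misses `t`, so the integrand vanishes off `Λ`. -/
lemma setLIntegral_measure_image_const_sub (hF : MeasurableSet F) {t Λ : Set G}
    (ht : ν tᶜ = 0) (htΛ : t + F ⊆ Λ) :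
    ∫⁻ x in Λ, ν ((fun z => x - z) '' F) ∂μ = μ F * ν Set.univ := by
  rw [setLIntegral_eq_of_support_subset, lintegral_measure_image_const_sub μ ν hF]
  intro x hx
  obtain ⟨z, hzF, hzt⟩ : ∃ z ∈ F, x - z ∈ t := by
    by_contra! hcon
    refine hx (measure_mono_null ?_ ht)
    rintro _ ⟨z, hz, rfl⟩
    exact hcon z hz
  simpa using htΛ (Set.add_mem_add hzt hzF)

end Translates

section Cubes

variable {d : ℕ}

lemma cube_eq_pi (d : ℕ) (j : Fin d → ℤ) :
    cube d j = Set.univ.pi fun i => Set.Ico ((j i : ℝ) - 1/2) ((j i : ℝ) + 1/2) := by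
  ext x; simp [cube, Set.mem_pi]

lemma measurableSet_cube (j : Fin d → ℤ) : MeasurableSet (cube d j) := by
  rw [cube_eq_pi]; exact MeasurableSet.univ_pi fun _ => measurableSet_Ico

lemma volume_cube (j : Fin d → ℤ) : volume (cube d j) = 1 := by
  rw [cube_eq_pi, volume_pi_pi]
  norm_num

lemma measure_cube_lt_top (ν : Measure (Fin d → ℝ)) [IsLocallyFiniteMeasure ν]
    (j : Fin d → ℤ) : ν (cube d j) < ⊤ := by
  refine lt_of_le_of_lt (measure_mono ?_) (isCompact_univ_pi fun i =>
    isCompact_Icc (a := (j i : ℝ) - 1/2) (b := (j i : ℝ) + 1/2)).measure_lt_top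
  rw [cube_eq_pi]
  exact Set.pi_mono fun _ _ => Set.Ico_subset_Icc_self

lemma mem_cube_iff_floor {x : Fin d → ℝ} {j : Fin d → ℤ} :
    x ∈ cube d j ↔ j = fun i => ⌊x i + 1/2⌋ := by
  simp only [cube, Set.mem_ofPred_eq, funext_iff, eq_comm (a := j _), Int.floor_eq_iff]
  refine forall_congr' fun i => ?_
  constructor <;> rintro ⟨h₁, h₂⟩ <;> constructor <;> linarith

lemma mem_cube_floor (x : Fin d → ℝ) : x ∈ cube d fun i => ⌊x i + 1/2⌋ :=
  mem_cube_iff_floor.2 rfl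

lemma pairwise_disjoint_cube : Pairwise fun j k : Fin d → ℤ => Disjoint (cube d j) (cube d k) :=
  fun _ _ hjk => Set.disjoint_left.2 fun _ hj hk =>
    hjk ((mem_cube_iff_floor.1 hj).trans (mem_cube_iff_floor.1 hk).symm)

lemma exists_mem_cube_zero_add_latVec (x : Fin d → ℝ) :
    ∃ y ∈ cube d 0, ∃ k, x = y + latVec d k := by
  set k : Fin d → ℤ := fun i => ⌊x i + 1/2⌋
  refine ⟨x - latVec d k, fun i => ?_, k, by simp⟩
  have := mem_cube_floor x i
  simp only [latVec, Pi.sub_apply, Pi.zero_apply, Int.cast_zero]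
  constructor <;> linarith [this.1, this.2]

lemma norm_sub_le_one_of_add_mem_cube {y z : Fin d → ℝ} {j k : Fin d → ℤ} (hy : y ∈ cube d j)
    (hz : z ∈ cube d 0) (hk : y + z ∈ cube d k) : ‖k - j‖ ≤ 1 := by
  refine (pi_norm_le_iff_of_nonneg zero_le_one).2 fun i => ?_
  obtain ⟨hy₁, hy₂⟩ := hy i
  obtain ⟨hz₁, hz₂⟩ := hz i
  obtain ⟨hk₁, hk₂⟩ := hk i
  simp only [Pi.zero_apply, Int.cast_zero, Pi.add_apply] at hz₁ hz₂ hk₁ hk₂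
  have h₁ : k i < j i + 2 := by exact_mod_cast (by linarith : (k i : ℝ) < j i + 2)
  have h₂ : j i < k i + 2 := by exact_mod_cast (by linarith : (j i : ℝ) < k i + 2)
  have h : |k i - j i| ≤ 1 := abs_le.2 ⟨by omega, by omega⟩
  simpa [Int.norm_eq_abs] using (show ((|k i - j i| : ℤ) : ℝ) ≤ 1 by exact_mod_cast h)

lemma iUnion_cube_norm_lt_add_cube_zero_subset (r : ℝ) :
    (⋃ j ∈ {j : Fin d → ℤ | ‖j‖ < r}, cube d j) + cube d 0 ⊆
      ⋃ k ∈ {k : Fin d → ℤ | ‖k‖ < r + 1}, cube d k := by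
  rintro _ ⟨y, hy, z, hz, rfl⟩
  obtain ⟨j, hj, hyj⟩ := Set.mem_iUnion₂.1 hy
  have hk := mem_cube_floor (y + z)
  refine Set.mem_biUnion ?_ hk
  calc ‖(fun i => ⌊(y + z) i + 1/2⌋)‖ ≤ ‖(fun i => ⌊(y + z) i + 1/2⌋) - j‖ + ‖j‖ :=
        norm_le_norm_sub_add _ _
    _ < 1 + r := add_lt_add_of_le_of_lt (norm_sub_le_one_of_add_mem_cube hyj hz hk) hj
    _ = r + 1 := add_comm 1 r

end Cubes

section LatticeBall

def latticeBall (d : ℕ) (r : ℝ) : Finset (Fin d → ℤ) :=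
  Fintype.piFinset fun _ => Finset.Icc (-(⌈r⌉ - 1)) (⌈r⌉ - 1)

variable {d : ℕ} {r : ℝ}

lemma coe_latticeBall (hr : 0 < r) : (latticeBall d r : Set (Fin d → ℤ)) = {j | ‖j‖ < r} := by
  ext j
  simp only [latticeBall, Fintype.coe_piFinset, Set.mem_pi, Set.mem_univ, forall_true_left,
    Finset.coe_Icc, Set.mem_Icc, Set.mem_ofPred_eq, pi_norm_lt_iff hr, Int.norm_eq_abs,
    ← Int.cast_abs, ← Int.lt_ceil, ← abs_le]
  exact forall_congr' fun i => by omega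

lemma card_latticeBall (d : ℕ) (r : ℝ) : (latticeBall d r).card = (2 * ⌈r⌉ - 1).toNat ^ d := by
  rw [latticeBall, Fintype.card_piFinset, Finset.prod_const, Finset.card_univ, Fintype.card_fin,
    Int.card_Icc]
  congr 2
  ring

lemma volume_iUnion_cube_norm_lt (hr : 0 < r) :
    volume (⋃ j ∈ {j : Fin d → ℤ | ‖j‖ < r}, cube d j) = (2 * ⌈r⌉ - 1).toNat ^ d := by
  rw [← coe_latticeBall hr, Finset.set_biUnion_coe,
    measure_biUnion_finset (fun _ _ _ _ hjk => pairwise_disjoint_cube hjk)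
      fun j _ => measurableSet_cube j]
  simp [volume_cube, card_latticeBall]

lemma volume_iUnion_cube_norm_lt_le (hr : 1 < r) :
    volume (⋃ j ∈ {j : Fin d → ℤ | ‖j‖ < r}, cube d j) ≤
      3 ^ d * volume (⋃ j ∈ {j : Fin d → ℤ | ‖j‖ < r - 1}, cube d j) := by
  rw [volume_iUnion_cube_norm_lt (by linarith), volume_iUnion_cube_norm_lt (by linarith)]
  have hceil : ⌈r - 1⌉ = ⌈r⌉ - 1 := Int.ceil_sub_one r
  have htwo : 2 ≤ ⌈r⌉ := by
    have : 1 < ⌈r⌉ := Int.lt_ceil.2 (by exact_mod_cast hr)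
    omega
  have hle : (2 * ⌈r⌉ - 1).toNat ≤ 3 * (2 * ⌈r - 1⌉ - 1).toNat := by omega
  exact_mod_cast (Nat.pow_le_pow_left hle d).trans_eq (mul_pow 3 _ d)

end LatticeBall

section Regularisation

variable {d : ℕ} (ν : Measure (Fin d → ℝ)) (h : ℝ)

instance [SFinite ν] : SFinite (reg d ν h) := by
  unfold reg; infer_instance

variable [IsLocallyFiniteMeasure ν]

lemma reg_apply_cube (j : Fin d → ℤ) :
    reg d ν h (cube d j) = min (ENNReal.ofReal h) (ν (cube d j)) := by
  rw [reg, Measure.sum_apply _ (measurableSet_cube j), tsum_eq_single j]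
  · rw [Measure.smul_apply, Measure.restrict_apply_self, smul_eq_mul]
    split_ifs with hle
    · rw [one_mul, min_eq_right hle]
    · have hν : ν (cube d j) ≠ 0 := (lt_of_not_ge hle).ne_bot
      rw [ENNReal.div_mul_cancel hν (measure_cube_lt_top ν j).ne, min_eq_left (not_le.1 hle).le]
  · intro k hkj
    rw [Measure.smul_apply, Measure.restrict_apply (measurableSet_cube j),
      ((pairwise_disjoint_cube hkj).symm).inter_eq, measure_empty, smul_zero]

lemma reg_iUnion_heavy_cubes {H : Set (Fin d → ℤ)} (hH : ∀ j ∈ H, ENNReal.ofReal h ≤ ν (cube d j)) :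
    reg d ν h (⋃ j ∈ H, cube d j) = H.encard * ENNReal.ofReal h := by
  rw [measure_biUnion H.to_countable (fun _ _ _ _ hjk => pairwise_disjoint_cube hjk)
    fun j _ => measurableSet_cube j]
  simp_rw [reg_apply_cube]
  rw [tsum_congr fun j : H => min_eq_left (hH j j.2), ENNReal.tsum_const, Set.encard]

lemma heavy_mul_le_setLIntegral_reg {F : Set (Fin d → ℝ)} (hF : MeasurableSet F)
    (hF_sub : F ⊆ cube d 0) (r : ℝ) :
    {j : Fin d → ℤ | ‖j‖ < r ∧ ENNReal.ofReal h ≤ ν (cube d j)}.encard * ENNReal.ofReal h *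
        volume F ≤
      ∫⁻ x in ⋃ j ∈ {j : Fin d → ℤ | ‖j‖ < r + 1}, cube d j,
        reg d ν h ((fun z => x - z) '' F) := by
  set H := {j : Fin d → ℤ | ‖j‖ < r ∧ ENNReal.ofReal h ≤ ν (cube d j)}
  set T := ⋃ j ∈ H, cube d j
  have hT : MeasurableSet T := MeasurableSet.biUnion H.to_countable fun j _ => measurableSet_cube j
  have hTF : T + F ⊆ ⋃ k ∈ {k : Fin d → ℤ | ‖k‖ < r + 1}, cube d k :=
    (Set.add_subset_add (Set.biUnion_mono (fun _ hj => hj.1) fun _ _ => subset_rfl) hF_sub).trans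
      (iUnion_cube_norm_lt_add_cube_zero_subset r)
  calc (H.encard : ℝ≥0∞) * ENNReal.ofReal h * volume F
      = volume F * (reg d ν h).restrict T Set.univ := by
        rw [Measure.restrict_apply_univ, reg_iUnion_heavy_cubes ν h fun _ hj => hj.2, mul_comm]
    _ = ∫⁻ x in ⋃ j ∈ {j : Fin d → ℤ | ‖j‖ < r + 1}, cube d j,
          (reg d ν h).restrict T ((fun z => x - z) '' F) :=
        (setLIntegral_measure_image_const_sub _ _ hF
          (by simp [Measure.restrict_apply' hT]) hTF).symm
    _ ≤ _ := lintegral_mono fun x => Measure.restrict_le_self _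

end Regularisation

theorem statement7_general (d : ℕ) (f_u : ℝ) (hfu : 0 < f_u)
    (F : Set (Fin d → ℝ)) (hF_meas : MeasurableSet F) (hF_sub : F ⊆ cube d 0)
    (hF_pos : 0 < volume F) (s : ℝ) (hs : 0 < s) :
    ∃ c₁ : ℝ, 0 < c₁ ∧
      ∀ ψ : (Fin d → ℝ) → ℝ, Measurable ψ → (∀ x, 0 < ψ x) →
        (∀ (x : Fin d → ℝ) (j : Fin d → ℤ), ψ (x + latVec d j) = ψ x) →
        (∀ x ∈ cube d 0, s ≤ ψ x ^ 2) →
        ∀ ν : Measure (Fin d → ℝ), IsLocallyFiniteMeasure ν →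
        ∀ h L : ℝ, 0 < h → 1 < L →
          ENNReal.ofReal (c₁ * h) *
            ((({j : Fin d → ℤ | ‖j‖ < L - 1 ∧
                ENNReal.ofReal h ≤ ν (cube d j)}.encard : ℕ∞) : ℝ≥0∞) /
              volume (⋃ j ∈ {j : Fin d → ℤ | ‖j‖ < L - 1}, cube d j)) ≤
          (∫⁻ x in ⋃ j ∈ {j : Fin d → ℤ | ‖j‖ < L}, cube d j,
              ENNReal.ofReal f_u * reg d ν h ((fun z => x - z) '' F) *
                ENNReal.ofReal (ψ x ^ 2)) /
            volume (⋃ j ∈ {j : Fin d → ℤ | ‖j‖ < L}, cube d j) := by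
  have hF_fin : volume F ≠ ⊤ := ((measure_mono hF_sub).trans_lt (measure_cube_lt_top volume 0)).ne
  have hF_real : 0 < (volume F).toReal := ENNReal.toReal_pos hF_pos.ne' hF_fin
  refine ⟨f_u * s * (volume F).toReal / 3 ^ d, by positivity, ?_⟩
  intro ψ _ _ hψ_per hψ_cube ν _ h L hh hL
  have hψ_sq (x : Fin d → ℝ) : s ≤ ψ x ^ 2 := by
    obtain ⟨y, hy, k, rfl⟩ := exists_mem_cube_zero_add_latVec x
    rw [hψ_per]
    exact hψ_cube y hy
  have hc₁ : ENNReal.ofReal (f_u * s * (volume F).toReal / 3 ^ d * h) =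
      ENNReal.ofReal f_u * ENNReal.ofReal s * volume F * ENNReal.ofReal h / 3 ^ d := by
    rw [div_mul_eq_mul_div, ENNReal.ofReal_div_of_pos (by positivity),
      ENNReal.ofReal_mul (by positivity), ENNReal.ofReal_mul (by positivity), ENNReal.ofReal_mul hfu.le, ENNReal.ofReal_toReal hF_fin,
      ENNReal.ofReal_pow zero_le_three, ENNReal.ofReal_ofNat]
  have hheavy := heavy_mul_le_setLIntegral_reg ν h hF_meas hF_sub (L - 1)
  rw [sub_add_cancel] at hheavy
  set N := {j : Fin d → ℤ | ‖j‖ < L - 1 ∧ ENNReal.ofReal h ≤ ν (cube d j)}.encard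
  set Λ := ⋃ j ∈ {j : Fin d → ℤ | ‖j‖ < L}, cube d j
  have hintegral : ENNReal.ofReal f_u * ENNReal.ofReal s * (N * ENNReal.ofReal h * volume F) ≤
      ∫⁻ x in Λ, ENNReal.ofReal f_u * reg d ν h ((fun z => x - z) '' F) *
        ENNReal.ofReal (ψ x ^ 2) := calc
    _ ≤ ENNReal.ofReal f_u * ENNReal.ofReal s * ∫⁻ x in Λ, reg d ν h ((fun z => x - z) '' F) :=
      by gcongr
    _ = ∫⁻ x in Λ, ENNReal.ofReal f_u * reg d ν h ((fun z => x - z) '' F) * ENNReal.ofReal s := by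
      rw [← lintegral_const_mul' _ _ (by finiteness)]
      exact lintegral_congr fun x => by ring
    _ ≤ _ := lintegral_mono fun x => by gcongr; exact hψ_sq x
  rw [hc₁, ← ENNReal.mul_div_mul_comm (Or.inl (by positivity)) (Or.inl (by finiteness))]
  exact ENNReal.div_le_div ((le_of_eq (by ring)).trans hintegral) (volume_iUnion_cube_norm_lt_le hL)

/-- with `V_h(x) := f_u · ν^{(h)}(x - F)`, `Λ` the union of the cubes
`Λ_j`, `|j| < L`, and `Λ̃` the union of the cubes `Λ_j`, `|j| < L - 1`, one has
`|Λ|⁻¹ ∫_Λ V_h ψ² ≥ c₁ h |Λ̃|⁻¹ #{j : |j| < L-1, ν(Λ_j) ≥ h}` for a constant `c₁ > 0`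
depending only on `d`, `f_u`, `|F|` and `s`. -/
theorem statement7 (d : ℕ) (hd : 0 < d) (f_u : ℝ) (hfu : 0 < f_u)
    (F : Set (Fin d → ℝ)) (hF_meas : MeasurableSet F) (hF_sub : F ⊆ cube d 0)
    (hF_pos : 0 < volume F) (s : ℝ) (hs : 0 < s) :
    ∃ c₁ : ℝ, 0 < c₁ ∧
      ∀ ψ : (Fin d → ℝ) → ℝ, Measurable ψ → (∀ x, 0 < ψ x) →
        (∀ (x : Fin d → ℝ) (j : Fin d → ℤ), ψ (x + latVec d j) = ψ x) →
        (∀ x ∈ cube d 0, s ≤ ψ x ^ 2) →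
        ∀ ν : Measure (Fin d → ℝ), IsLocallyFiniteMeasure ν →
        ∀ h L : ℝ, 0 < h → 1 < L →
          ENNReal.ofReal (c₁ * h) *
            ((({j : Fin d → ℤ | ‖j‖ < L - 1 ∧
                ENNReal.ofReal h ≤ ν (cube d j)}.encard : ℕ∞) : ℝ≥0∞) /
              volume (⋃ j ∈ {j : Fin d → ℤ | ‖j‖ < L - 1}, cube d j)) ≤
          (∫⁻ x in ⋃ j ∈ {j : Fin d → ℤ | ‖j‖ < L}, cube d j,
              ENNReal.ofReal f_u * reg d ν h ((fun z => x - z) '' F) *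
                ENNReal.ofReal (ψ x ^ 2)) /
            volume (⋃ j ∈ {j : Fin d → ℤ | ‖j‖ < L}, cube d j) :=
  statement7_general d f_u hfu F hF_meas hF_sub hF_pos s hs
end
end

section
/- Let U : ℝ^d → ℝ be ℤ^d-periodic and locally integrable, and let ψ : ℝ^d → (0,∞) be a continuously differentiable ℤ^d-periodic function which is a weak eigenfunction of −Δ + U with eigenvalue 0, i.e. ∫_{ℝ^d} (∇φ(x)·∇ψ(x) + U(x) φ(x) ψ(x)) dx = 0 for every continuously differentiable φ : ℝ^d → ℝ with compact support. Then there exist constants C₁, C₂ ∈ (0,∞), depending only on d and ψ, such that for every L > 1 and every nonnegative locally integrable V : ℝ^d → [0,∞), with Λ := {x ∈ ℝ^d : |x| < L/4} the open cube of side L/2, one has inf{ (∫_Λ (|∇φ(x)|² + (U(x) + V(x)) φ(x)²) dx) / (∫_Λ φ(x)² dx) : φ : ℝ^d → ℝ continuously differentiable, φ ≢ 0, with compact support contained in Λ } ≤ C₁ · |Λ|^{−1} ∫_Λ V(x) dx + C₂ · L^{−2}. -/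
/-!
Ground state substitution: for `φ = ψ χ` the pointwise identity
`|∇(ψχ)|² = ∇(ψχ²)·∇ψ + ψ² |∇χ|²` and the weak equation tested against `ψ χ²` give
`∫ |∇(ψχ)|² + U (ψχ)² = ∫ ψ² |∇χ|²`, so the periodic potential drops out of the energy.
By periodicity `ψ` is bounded between two positive constants; taking for `χ` a fixed bump
rescaled to the cube `Λ = {|x| < L/4}`, the Rayleigh quotient of `ψ χ` is then at most a
multiple of `(L/4)⁻² + |Λ|⁻¹ ∫_Λ V`.
-/

open MeasureTheory ENNReal

noncomputable section

-- `hb` covers a set that is not bounded below, whose `sInf` is `0`.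
theorem Real.sInf_le_of_mem_of_nonneg {S : Set ℝ} {a b : ℝ} (ha : a ∈ S) (hab : a ≤ b)
    (hb : 0 ≤ b) : sInf S ≤ b := by
  by_cases h : BddBelow S
  · exact (csInf_le h ha).trans hab
  · rw [Real.sInf_of_not_bddBelow h]
    exact hb

section Periodic

variable {d : ℕ}

theorem range_eq_image_Icc_of_periodic {X : Type*} {f : (Fin d → ℝ) → X}
    (hf : ∀ x j, f (x + latVec d j) = f x) : Set.range f = f '' Set.Icc 0 1 := by
  refine (Set.image_subset_range _ _).antisymm' ?_
  rintro _ ⟨x, rfl⟩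
  refine ⟨fun i => Int.fract (x i),
    ⟨fun i => Int.fract_nonneg _, fun i => (Int.fract_lt_one _).le⟩, ?_⟩
  have hx : (fun i => Int.fract (x i)) + latVec d (fun i => ⌊x i⌋) = x := by
    funext i
    exact Int.fract_add_floor (x i)
  rw [← hf, hx]

theorem exists_pos_bounds_of_periodic {f : (Fin d → ℝ) → ℝ} (hc : Continuous f)
    (hpos : ∀ x, 0 < f x) (hf : ∀ x j, f (x + latVec d j) = f x) :
    ∃ m M, 0 < m ∧ ∀ x, m ≤ f x ∧ f x ≤ M := by
  have hK : IsCompact (Set.range f) := by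
    rw [range_eq_image_Icc_of_periodic hf]
    exact isCompact_Icc.image hc
  obtain ⟨_, ⟨x₀, rfl⟩, hleast⟩ := hK.exists_isLeast (Set.range_nonempty f)
  obtain ⟨M, hM⟩ := hK.bddAbove
  exact ⟨f x₀, M, hpos x₀, fun x => ⟨hleast ⟨x, rfl⟩, hM ⟨x, rfl⟩⟩⟩

end Periodic

theorem fderiv_mul_apply_sq {E : Type*} [NormedAddCommGroup E] [NormedSpace ℝ E]
    {ψ χ : E → ℝ} {x : E} (hψ : DifferentiableAt ℝ ψ x) (hχ : DifferentiableAt ℝ χ x)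
    (v : E) :
    fderiv ℝ (fun y => ψ y * χ y) x v ^ 2 =
      fderiv ℝ (fun y => ψ y * (χ y * χ y)) x v * fderiv ℝ ψ x v +
        ψ x ^ 2 * fderiv ℝ χ x v ^ 2 := by
  rw [fderiv_fun_mul hψ hχ, fderiv_fun_mul hψ (hχ.fun_mul hχ), fderiv_fun_mul hχ hχ]
  simp only [add_apply, smul_apply, smul_eq_mul]
  ring

section GroundState

variable {d : ℕ}

def gradSq (f : (Fin d → ℝ) → ℝ) (x : Fin d → ℝ) : ℝ :=
  ∑ i : Fin d, fderiv ℝ f x (Pi.single i 1) ^ 2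

/-- `(-Δ + U) ψ = 0` in the weak sense. -/
def IsWeakSchrodingerSolution (U ψ : (Fin d → ℝ) → ℝ) : Prop :=
  ∀ φ : (Fin d → ℝ) → ℝ, ContDiff ℝ 1 φ → HasCompactSupport φ →
    (∫ x, ((∑ i : Fin d, fderiv ℝ φ x (Pi.single i 1) * fderiv ℝ ψ x (Pi.single i 1)) +
      U x * φ x * ψ x)) = 0

theorem gradSq_nonneg (f : (Fin d → ℝ) → ℝ) (x : Fin d → ℝ) : 0 ≤ gradSq f x :=
  Finset.sum_nonneg fun _ _ => sq_nonneg _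

theorem ContDiff.continuous_gradSq {f : (Fin d → ℝ) → ℝ} (hf : ContDiff ℝ 1 f) :
    Continuous (gradSq f) :=
  continuous_finsetSum _ fun _ _ =>
    ((hf.continuous_fderiv one_ne_zero).clm_apply continuous_const).pow 2

theorem HasCompactSupport.gradSq {f : (Fin d → ℝ) → ℝ} (hf : HasCompactSupport f) :
    HasCompactSupport (gradSq f) :=
  (hf.fderiv (𝕜 := ℝ)).mono fun x hx h => hx (by simp [_root_.gradSq, h])

variable {U ψ χ : (Fin d → ℝ) → ℝ}

theorem IsWeakSchrodingerSolution.integral_energy_mul_eq (hweak : IsWeakSchrodingerSolution U ψ)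
    (hU : LocallyIntegrable U volume) (hψ : ContDiff ℝ 1 ψ) (hχ : ContDiff ℝ 1 χ)
    (hχc : HasCompactSupport χ) :
    ∫ x, (gradSq (fun y => ψ y * χ y) x + U x * (ψ x * χ x) ^ 2) =
      ∫ x, ψ x ^ 2 * gradSq χ x := by
  set w : (Fin d → ℝ) → ℝ := fun y => ψ y * (χ y * χ y)
  have hw : ContDiff ℝ 1 w := hψ.mul (hχ.mul hχ)
  have hwc : HasCompactSupport w := hχc.mul_left.mul_left
  have hpair : Integrable fun x =>
      (∑ i : Fin d, fderiv ℝ w x (Pi.single i 1) * fderiv ℝ ψ x (Pi.single i 1)) +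
        U x * w x * ψ x := by
    refine Integrable.add ?_ ?_
    · refine Continuous.integrable_of_hasCompactSupport
        (continuous_finsetSum _ fun i _ => ?_) ?_
      · exact ((hw.continuous_fderiv one_ne_zero).clm_apply continuous_const).mul
          ((hψ.continuous_fderiv one_ne_zero).clm_apply continuous_const)
      · exact (hwc.fderiv (𝕜 := ℝ)).mono fun x hx h => hx (by simp [h])
    · simpa only [smul_eq_mul, Pi.mul_apply, mul_assoc] using
        hU.integrable_smul_right_of_hasCompactSupport (hw.continuous.mul hψ.continuous)
          hwc.mul_right
  have hweighted : Integrable fun x => ψ x ^ 2 * gradSq χ x :=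
    ((hψ.continuous.pow 2).mul hχ.continuous_gradSq).integrable_of_hasCompactSupport
      hχc.gradSq.mul_left
  have hpoint : ∀ x, gradSq (fun y => ψ y * χ y) x + U x * (ψ x * χ x) ^ 2 =
      ((∑ i : Fin d, fderiv ℝ w x (Pi.single i 1) * fderiv ℝ ψ x (Pi.single i 1)) +
        U x * w x * ψ x) + ψ x ^ 2 * gradSq χ x := by
    intro x
    simp only [gradSq, fderiv_mul_apply_sq (hψ.differentiable one_ne_zero x)
      (hχ.differentiable one_ne_zero x), Finset.sum_add_distrib, Finset.mul_sum, w]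
    ring
  simp_rw [hpoint]
  rw [integral_add hpair hweighted, hweak w hw hwc, zero_add]

end GroundState

section RayleighQuotient

variable {d : ℕ} {U V ψ χ : (Fin d → ℝ) → ℝ} {m M : ℝ} {s : Set (Fin d → ℝ)}

theorem MeasureTheory.LocallyIntegrable.integrable_mul_sq {W φ : (Fin d → ℝ) → ℝ}
    (hW : LocallyIntegrable W volume) (hφ : Continuous φ) (hφc : HasCompactSupport φ) :
    Integrable fun x => W x * φ x ^ 2 := by
  simpa only [smul_eq_mul, Pi.pow_apply] using
    hW.integrable_smul_right_of_hasCompactSupport (hφ.pow 2)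
      (hφc.mono fun x hx h => hx (by simp [h]))

theorem setIntegral_energy_eq_integral {φ W : (Fin d → ℝ) → ℝ} (hs : tsupport φ ⊆ s) :
    ∫ x in s, (gradSq φ x + W x * φ x ^ 2) = ∫ x, (gradSq φ x + W x * φ x ^ 2) :=
  setIntegral_eq_integral_of_forall_compl_eq_zero fun x hx => by
    have hx' : x ∉ tsupport φ := fun h => hx (hs h)
    simp [gradSq, fderiv_of_notMem_tsupport ℝ hx', image_eq_zero_of_notMem_tsupport hx']

theorem integral_potential_mul_sq_le (hV0 : ∀ x, 0 ≤ V x) (hV : LocallyIntegrable V volume)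
    (hψ : Continuous ψ) (hψM : ∀ x, |ψ x| ≤ M) (hχ : Continuous χ) (hχc : HasCompactSupport χ)
    (hχ1 : ∀ x, |χ x| ≤ 1) (hs : MeasurableSet s) (hsb : Bornology.IsBounded s)
    (hχs : tsupport χ ⊆ s) :
    ∫ x, V x * (ψ x * χ x) ^ 2 ≤ M ^ 2 * ∫ x in s, V x := by
  have hVs : IntegrableOn V s volume :=
    (hV.integrableOn_isCompact hsb.isCompact_closure).mono_set subset_closure
  rw [← setIntegral_eq_integral_of_forall_compl_eq_zero fun x hx => by
    simp [image_eq_zero_of_notMem_tsupport fun h => hx (hχs h)], ← integral_const_mul]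
  refine setIntegral_mono_on
    (hV.integrable_mul_sq (hψ.mul hχ) hχc.mul_left).integrableOn (hVs.const_mul _) hs
    fun x _ => ?_
  have hφM : (ψ x * χ x) ^ 2 ≤ M ^ 2 := by
    rw [← sq_abs, abs_mul]
    exact pow_le_pow_left₀ (by positivity)
      (by simpa using mul_le_mul (hψM x) (hχ1 x) (abs_nonneg _) ((abs_nonneg _).trans (hψM x)))
      2
  nlinarith [hV0 x]

theorem setIntegral_energy_mul_le (hweak : IsWeakSchrodingerSolution U ψ)
    (hU : LocallyIntegrable U volume) (hψ : ContDiff ℝ 1 ψ) (hψM : ∀ x, |ψ x| ≤ M)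
    (hV0 : ∀ x, 0 ≤ V x) (hV : LocallyIntegrable V volume) (hχ : ContDiff ℝ 1 χ)
    (hχc : HasCompactSupport χ) (hχ1 : ∀ x, |χ x| ≤ 1) (hs : MeasurableSet s)
    (hsb : Bornology.IsBounded s) (hχs : tsupport χ ⊆ s) :
    ∫ x in s, (gradSq (fun y => ψ y * χ y) x + (U x + V x) * (ψ x * χ x) ^ 2) ≤
      M ^ 2 * ((∫ x, gradSq χ x) + ∫ x in s, V x) := by
  have hφ : ContDiff ℝ 1 fun y => ψ y * χ y := hψ.mul hχ
  have hφc : HasCompactSupport fun y => ψ y * χ y := hχc.mul_left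
  have hgradU : Integrable fun x => gradSq (fun y => ψ y * χ y) x + U x * (ψ x * χ x) ^ 2 :=
    (hφ.continuous_gradSq.integrable_of_hasCompactSupport hφc.gradSq).add
      (hU.integrable_mul_sq hφ.continuous hφc)
  rw [setIntegral_energy_eq_integral (tsupport_mul_subset_right.trans hχs)]
  simp_rw [add_mul, ← add_assoc]
  rw [integral_add hgradU (hV.integrable_mul_sq hφ.continuous hφc),
    hweak.integral_energy_mul_eq hU hψ hχ hχc, mul_add, ← integral_const_mul]
  refine add_le_add (integral_mono_of_nonneg
    (.of_forall fun x => mul_nonneg (sq_nonneg _) (gradSq_nonneg χ x))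
    ((hχ.continuous_gradSq.integrable_of_hasCompactSupport hχc.gradSq).const_mul _)
    (.of_forall fun x => ?_))
    (integral_potential_mul_sq_le hV0 hV hψ.continuous hψM hχ.continuous hχc hχ1 hs hsb hχs)
  have hψ2 : ψ x ^ 2 ≤ M ^ 2 := by
    simpa only [sq_abs] using pow_le_pow_left₀ (abs_nonneg _) (hψM x) 2
  exact mul_le_mul_of_nonneg_right hψ2 (gradSq_nonneg χ x)

theorem mul_integral_sq_le_setIntegral_mul_sq (hm : 0 ≤ m) (hψm : ∀ x, m ≤ ψ x)
    (hψ : Continuous ψ) (hχ : Continuous χ) (hχc : HasCompactSupport χ)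
    (hχs : tsupport χ ⊆ s) :
    m ^ 2 * ∫ x, χ x ^ 2 ≤ ∫ x in s, (ψ x * χ x) ^ 2 := by
  rw [setIntegral_eq_integral_of_forall_compl_eq_zero fun x hx => by
    simp [image_eq_zero_of_notMem_tsupport fun h => hx (hχs h)], ← integral_const_mul]
  refine integral_mono_of_nonneg (.of_forall fun x => by positivity)
    (((hψ.mul hχ).pow 2).integrable_of_hasCompactSupport
      (hχc.mono fun x hx h => hx (by simp [h])))
    (.of_forall fun x => ?_)
  show m ^ 2 * χ x ^ 2 ≤ (ψ x * χ x) ^ 2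
  rw [mul_pow]
  exact mul_le_mul_of_nonneg_right (pow_le_pow_left₀ hm (hψm x) 2) (sq_nonneg _)

theorem rayleigh_quotient_mul_le (hweak : IsWeakSchrodingerSolution U ψ)
    (hU : LocallyIntegrable U volume) (hψ : ContDiff ℝ 1 ψ) (hm : 0 < m) (hψm : ∀ x, m ≤ ψ x)
    (hψM : ∀ x, |ψ x| ≤ M) (hV0 : ∀ x, 0 ≤ V x) (hV : LocallyIntegrable V volume)
    (hχ : ContDiff ℝ 1 χ) (hχc : HasCompactSupport χ) (hχ1 : ∀ x, |χ x| ≤ 1)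
    (hχ2 : 0 < ∫ x, χ x ^ 2) (hs : MeasurableSet s) (hsb : Bornology.IsBounded s)
    (hχs : tsupport χ ⊆ s) :
    (∫ x in s, (gradSq (fun y => ψ y * χ y) x + (U x + V x) * (ψ x * χ x) ^ 2)) /
        ∫ x in s, (ψ x * χ x) ^ 2 ≤
      M ^ 2 / m ^ 2 * (((∫ x, gradSq χ x) + ∫ x in s, V x) / ∫ x, χ x ^ 2) := by
  rw [div_mul_div_comm]
  refine div_le_div₀ (mul_nonneg (sq_nonneg _) (add_nonneg (integral_nonneg (gradSq_nonneg χ))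
    (setIntegral_nonneg hs fun x _ => hV0 x)))
    (setIntegral_energy_mul_le hweak hU hψ hψM hV0 hV hχ hχc hχ1 hs hsb hχs) (by positivity)
    (mul_integral_sq_le_setIntegral_mul_sq hm.le hψm hψ.continuous hχ.continuous hχc hχs)

end RayleighQuotient

theorem exists_bump_unitBall (d : ℕ) :
    ∃ η : (Fin d → ℝ) → ℝ, ContDiff ℝ 1 η ∧ HasCompactSupport η ∧
      tsupport η ⊆ Metric.ball 0 1 ∧ (∀ x, |η x| ≤ 1) ∧ η 0 = 1 ∧ 0 < ∫ x, η x ^ 2 := by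
  obtain ⟨η, hηs, hηc, hη, hη01, hη0⟩ :=
    exists_contDiff_tsupport_subset (n := 1) (Metric.ball_mem_nhds (0 : Fin d → ℝ) one_pos)
  refine ⟨η, hη, hηc, hηs, fun x => abs_le.2 ⟨?_, (hη01 ⟨x, rfl⟩).2⟩, hη0, ?_⟩
  · linarith [(hη01 ⟨x, rfl⟩).1]
  · exact (hη.continuous.pow 2).integral_pos_of_hasCompactSupport_nonneg_nonzero
      (hηc.mono fun x hx h => hx (by simp [h])) (fun x => sq_nonneg _) (x := 0) (by simp [hη0])

open scoped Pointwise

section Rescaling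

variable {d : ℕ} {c : ℝ}

theorem tsupport_comp_inv_smul₀ {E F : Type*} [NormedAddCommGroup E] [NormedSpace ℝ E] [Zero F]
    (hc : c ≠ 0) (f : E → F) : tsupport (fun x => f (c⁻¹ • x)) = c • tsupport f := by
  simp only [tsupport, support_comp_inv_smul₀ hc, closure_smul₀' hc]

theorem integral_comp_inv_smul_pi (f : (Fin d → ℝ) → ℝ) (hc : 0 ≤ c) :
    ∫ x, f (c⁻¹ • x) = c ^ d * ∫ x, f x := by
  rw [Measure.integral_comp_inv_smul_of_nonneg _ _ hc, Module.finrank_fin_fun, smul_eq_mul]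

theorem gradSq_comp_inv_smul (η : (Fin d → ℝ) → ℝ) (c : ℝ) (x : Fin d → ℝ) :
    gradSq (fun y => η (c⁻¹ • y)) x = (c ^ 2)⁻¹ * gradSq η (c⁻¹ • x) := by
  simp only [gradSq, fderiv_comp_smul, smul_apply, smul_eq_mul, mul_pow,
    Finset.mul_sum, inv_pow]

theorem integral_gradSq_comp_inv_smul (η : (Fin d → ℝ) → ℝ) (hc : 0 ≤ c) :
    ∫ x, gradSq (fun y => η (c⁻¹ • y)) x = c ^ d * (c ^ 2)⁻¹ * ∫ x, gradSq η x := by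
  simp_rw [gradSq_comp_inv_smul, integral_const_mul]
  rw [integral_comp_inv_smul_pi (gradSq η) hc]
  ring

theorem tsupport_comp_inv_smul_subset_ball {η : (Fin d → ℝ) → ℝ}
    (hηs : tsupport η ⊆ Metric.ball 0 1) (hc : 0 < c) :
    tsupport (fun x => η (c⁻¹ • x)) ⊆ Metric.ball 0 c := by
  rw [tsupport_comp_inv_smul₀ hc.ne', ← smul_unitBall_of_pos hc]
  exact Set.smul_set_mono hηs

theorem rayleigh_quotient_mul_rescale_le {U V ψ η : (Fin d → ℝ) → ℝ} {m M : ℝ}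
    (hweak : IsWeakSchrodingerSolution U ψ) (hU : LocallyIntegrable U volume)
    (hψ : ContDiff ℝ 1 ψ) (hm : 0 < m) (hψm : ∀ x, m ≤ ψ x) (hψM : ∀ x, |ψ x| ≤ M)
    (hV0 : ∀ x, 0 ≤ V x) (hV : LocallyIntegrable V volume) (hη : ContDiff ℝ 1 η)
    (hηc : HasCompactSupport η) (hη1 : ∀ x, |η x| ≤ 1) (hηs : tsupport η ⊆ Metric.ball 0 1)
    (hη2 : 0 < ∫ x, η x ^ 2) (hc : 0 < c) :
    (∫ x in Metric.ball 0 c, (gradSq (fun y => ψ y * η (c⁻¹ • y)) x +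
        (U x + V x) * (ψ x * η (c⁻¹ • x)) ^ 2)) /
        ∫ x in Metric.ball 0 c, (ψ x * η (c⁻¹ • x)) ^ 2 ≤
      M ^ 2 / (m ^ 2 * ∫ x, η x ^ 2) *
        ((c ^ 2)⁻¹ * (∫ x, gradSq η x) + (c ^ d)⁻¹ * ∫ x in Metric.ball 0 c, V x) := by
  have hχ2 : ∫ x, η (c⁻¹ • x) ^ 2 = c ^ d * ∫ x, η x ^ 2 :=
    integral_comp_inv_smul_pi (η · ^ 2) hc.le
  refine (rayleigh_quotient_mul_le (χ := fun x => η (c⁻¹ • x)) hweak hU hψ hm hψm hψM hV0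
    hV (hη.comp (contDiff_const_smul _)) (hηc.comp_smul (inv_ne_zero hc.ne')) (fun x => hη1 _)
    (by rw [hχ2]; positivity) Metric.isOpen_ball.measurableSet Metric.isBounded_ball
    (tsupport_comp_inv_smul_subset_ball hηs hc)).trans_eq ?_
  rw [integral_gradSq_comp_inv_smul η hc.le, hχ2]
  field_simp

end Rescaling

theorem statement12_general (d : ℕ)
    (U : (Fin d → ℝ) → ℝ) (hU_loc : LocallyIntegrable U volume)
    (ψ : (Fin d → ℝ) → ℝ) (hψ_C1 : ContDiff ℝ 1 ψ) (hψ_pos : ∀ x, 0 < ψ x)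
    (hψ_per : ∀ (x : Fin d → ℝ) (j : Fin d → ℤ), ψ (x + latVec d j) = ψ x)
    (hweak : ∀ φ : (Fin d → ℝ) → ℝ, ContDiff ℝ 1 φ → HasCompactSupport φ →
      (∫ x : Fin d → ℝ,
        ((∑ i : Fin d, fderiv ℝ φ x (Pi.single i 1) * fderiv ℝ ψ x (Pi.single i 1)) +
          U x * φ x * ψ x)) = 0) :
    ∃ C₁ C₂ : ℝ, 0 < C₁ ∧ 0 < C₂ ∧
      ∀ L : ℝ, 1 < L →
      ∀ V : (Fin d → ℝ) → ℝ, (∀ x, 0 ≤ V x) → LocallyIntegrable V volume →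
        sInf {r : ℝ | ∃ φ : (Fin d → ℝ) → ℝ, ContDiff ℝ 1 φ ∧ HasCompactSupport φ ∧
            tsupport φ ⊆ {x : Fin d → ℝ | ‖x‖ < L / 4} ∧ φ ≠ 0 ∧
            r = (∫ x in {x : Fin d → ℝ | ‖x‖ < L / 4},
                  ((∑ i : Fin d, (fderiv ℝ φ x (Pi.single i 1)) ^ 2) +
                    (U x + V x) * φ x ^ 2)) /
                ∫ x in {x : Fin d → ℝ | ‖x‖ < L / 4}, φ x ^ 2} ≤
          C₁ * ((volume {x : Fin d → ℝ | ‖x‖ < L / 4}).toReal)⁻¹ *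
              (∫ x in {x : Fin d → ℝ | ‖x‖ < L / 4}, V x) +
            C₂ / L ^ 2 := by
  obtain ⟨m, M, hm, hψmM⟩ := exists_pos_bounds_of_periodic hψ_C1.continuous hψ_pos hψ_per
  have hM : 0 < M := hm.trans_le ((hψmM 0).1.trans (hψmM 0).2)
  obtain ⟨η, hη, hηc, hηs, hη1, hη0, hB⟩ := exists_bump_unitBall d
  set A := ∫ x, gradSq η x
  set B := ∫ x, η x ^ 2
  have hA : 0 ≤ A := integral_nonneg (gradSq_nonneg η)
  refine ⟨2 ^ d * M ^ 2 / (m ^ 2 * B), 16 * M ^ 2 * (A + 1) / (m ^ 2 * B), by positivity,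
    by positivity, fun L hL V hV0 hV => ?_⟩
  have hc : 0 < L / 4 := by linarith
  rw [← ball_zero_eq]
  set I := ∫ x in Metric.ball 0 (L / 4), V x
  have hI : 0 ≤ I := setIntegral_nonneg measurableSet_ball fun x _ => hV0 x
  have hφ0 : (fun x => ψ x * η ((L / 4)⁻¹ • x)) ≠ 0 := fun h =>
    (hψ_pos 0).ne' (by simpa [hη0] using congr_fun h 0)
  refine Real.sInf_le_of_mem_of_nonneg ⟨_, hψ_C1.mul (hη.comp (contDiff_const_smul _)),
    (hηc.comp_smul (inv_ne_zero hc.ne')).mul_left,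
    tsupport_mul_subset_right.trans (tsupport_comp_inv_smul_subset_ball hηs hc), hφ0, rfl⟩
    ((rayleigh_quotient_mul_rescale_le hweak hU_loc hψ_C1 hm (fun x => (hψmM x).1)
      (fun x => (abs_of_pos (hψ_pos x)).trans_le (hψmM x).2) hV0 hV hη hηc hη1 hηs hB hc).trans
      ?_) (by positivity)
  rw [Real.volume_pi_ball 0 hc, Fintype.card_fin, ENNReal.toReal_ofReal (by positivity), mul_pow]
  calc M ^ 2 / (m ^ 2 * B) * (((L / 4) ^ 2)⁻¹ * A + ((L / 4) ^ d)⁻¹ * I)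
      = 2 ^ d * M ^ 2 / (m ^ 2 * B) * (2 ^ d * (L / 4) ^ d)⁻¹ * I +
          16 * M ^ 2 * A / (m ^ 2 * B) / L ^ 2 := by
        field_simp
        ring
    _ ≤ _ := by gcongr; linarith

/-- for a `ℤ^d`-periodic locally integrable `U` and a positive `C¹`
`ℤ^d`-periodic weak eigenfunction `ψ` of `-Δ + U` with eigenvalue `0`, there are
`C₁, C₂ > 0` (depending only on `d` and `ψ`) such that for every `L > 1` and every
nonnegative locally integrable `V`, the infimum of the Rayleigh quotients over `C¹`
functions compactly supported in the open cube `Λ = {|x| < L/4}` is at most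
`C₁ |Λ|⁻¹ ∫_Λ V + C₂ L⁻²`. -/
theorem statement12 (d : ℕ) (hd : 0 < d)
    (U : (Fin d → ℝ) → ℝ) (hU_loc : LocallyIntegrable U volume)
    (hU_per : ∀ (x : Fin d → ℝ) (j : Fin d → ℤ), U (x + latVec d j) = U x)
    (ψ : (Fin d → ℝ) → ℝ) (hψ_C1 : ContDiff ℝ 1 ψ) (hψ_pos : ∀ x, 0 < ψ x)
    (hψ_per : ∀ (x : Fin d → ℝ) (j : Fin d → ℤ), ψ (x + latVec d j) = ψ x)
    (hweak : ∀ φ : (Fin d → ℝ) → ℝ, ContDiff ℝ 1 φ → HasCompactSupport φ →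
      (∫ x : Fin d → ℝ,
        ((∑ i : Fin d, fderiv ℝ φ x (Pi.single i 1) * fderiv ℝ ψ x (Pi.single i 1)) +
          U x * φ x * ψ x)) = 0) :
    ∃ C₁ C₂ : ℝ, 0 < C₁ ∧ 0 < C₂ ∧
      ∀ L : ℝ, 1 < L →
      ∀ V : (Fin d → ℝ) → ℝ, (∀ x, 0 ≤ V x) → LocallyIntegrable V volume →
        sInf {r : ℝ | ∃ φ : (Fin d → ℝ) → ℝ, ContDiff ℝ 1 φ ∧ HasCompactSupport φ ∧
            tsupport φ ⊆ {x : Fin d → ℝ | ‖x‖ < L / 4} ∧ φ ≠ 0 ∧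
            r = (∫ x in {x : Fin d → ℝ | ‖x‖ < L / 4},
                  ((∑ i : Fin d, (fderiv ℝ φ x (Pi.single i 1)) ^ 2) +
                    (U x + V x) * φ x ^ 2)) /
                ∫ x in {x : Fin d → ℝ | ‖x‖ < L / 4}, φ x ^ 2} ≤
          C₁ * ((volume {x : Fin d → ℝ | ‖x‖ < L / 4}).toReal)⁻¹ *
              (∫ x in {x : Fin d → ℝ | ‖x‖ < L / 4}, V x) +
            C₂ / L ^ 2 :=
  statement12_general d U hU_loc ψ hψ_C1 hψ_pos hψ_per hweak
end
end
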